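/- arXiv:1711.02056 — 5 statements merged into one kernel-verified Lean document; each statement's English description precedes it below -/
import Mathlib

section
/- In the single-transmission ($M=1$) Rayleigh fading model, the outage probability equals $1 - f(\mu, \lambda/B, \Gamma)$ where $f(\mu, \alpha, \Gamma) = e^{-\mu\Gamma/\rho}(\Gamma+1)\frac{e^{\alpha/(\Gamma+1)} - 1}{e^{\alpha} - 1}$. That is, if $h \sim \mathrm{Exp}(\mu)$, $K$ is zero-truncated Poisson with parameter $\alpha = \lambda/B$, the interference given $K = k$ is $I_k = \rho\sum_{i=1}^{k-1} g_i$ with $g_i$ i.i.d. $\mathrm{Exp}(\mu)$ independent of $h$ and $K$, then $\mathbb{P}\left[\frac{\rho h}{1 + I_K} < \Gamma\right] = 1 - e^{-\mu\Gamma/\rho}(\Gamma+1)\frac{e^{\alpha/(\Gamma+1)} - 1}{e^{\alpha} - 1}$. -/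
/-!
Given `K = k`, the transmission succeeds iff `h ≥ Γ/ρ + Γ S` with `S` a sum of `k - 1` independent
`Exp(μ)` variables independent of `h`. The exponential tail `P[h ≥ z] = e^{-μz}` turns this into
`e^{-μΓ/ρ} E[e^{-μΓ S}] = e^{-μΓ/ρ} (Γ + 1)^{-(k-1)}`, by the Laplace transform `μ / (μ + s)` of
`Exp(μ)`. Averaging over the zero-truncated Poisson law of `K` is then a sum of the exponential
series.
-/

open MeasureTheory ProbabilityTheory Real Set
open scoped ENNReal Nat

namespace ProbabilityTheory

lemma expMeasure_eq_withDensity (r : ℝ) : expMeasure r = volume.withDensity (exponentialPDF r) :=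
  rfl

lemma ae_nonneg_expMeasure {r : ℝ} (hr : 0 < r) : ∀ᵐ x ∂expMeasure r, 0 ≤ x := by
  have := isProbabilityMeasure_expMeasure hr
  have hIic : expMeasure r (Iic 0) = 0 := by
    rw [← ofReal_cdf, cdf_expMeasure_eq hr, if_pos le_rfl]
    simp
  simpa [ae_iff, Iio_def] using measure_mono_null Iio_subset_Iic_self hIic

lemma expMeasure_Ici {r a : ℝ} (hr : 0 < r) (ha : 0 ≤ a) :
    expMeasure r (Ici a) = ENNReal.ofReal (exp (-(r * a))) := by
  have := isProbabilityMeasure_expMeasure hr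
  have hatom : expMeasure r {a} = 0 :=
    withDensity_absolutelyContinuous _ _ Real.volume_singleton
  rw [← measure_congr (Ioi_ae_eq_Ici' hatom), ← compl_Iic, prob_compl_eq_one_sub measurableSet_Iic,
    ← ofReal_cdf, cdf_expMeasure_eq hr, if_pos ha, ← ENNReal.ofReal_one,
    ← ENNReal.ofReal_sub _ (sub_nonneg.2 (exp_le_one_iff.2 (by nlinarith))), sub_sub_cancel]

lemma lintegral_exp_neg_mul_expMeasure {r s : ℝ} (hr : 0 < r) (hs : 0 ≤ s) :
    ∫⁻ x, ENNReal.ofReal (exp (-(s * x))) ∂expMeasure r = ENNReal.ofReal (r / (r + s)) := by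
  -- `e^{-sx}` tilts the `Exp(r)` density into `r / (r + s)` times the `Exp(r + s)` density.
  have hdensity : ∀ x, exponentialPDF r x * ENNReal.ofReal (exp (-(s * x)))
      = ENNReal.ofReal (r / (r + s)) * exponentialPDF (r + s) x := by
    intro x
    rcases le_or_gt 0 x with hx | hx
    · rw [exponentialPDF_of_nonneg hx, exponentialPDF_of_nonneg hx,
        ← ENNReal.ofReal_mul (by positivity), ← ENNReal.ofReal_mul (by positivity)]
      congr 1
      rw [mul_assoc, ← exp_add]
      field_simp
      ring_nf
    · simp [exponentialPDF_of_neg hx]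
  have hpdf : ∀ r, Measurable (exponentialPDF r) :=
    fun r => (measurable_exponentialPDFReal r).ennreal_ofReal
  rw [expMeasure_eq_withDensity, lintegral_withDensity_eq_lintegral_mul _ (hpdf r) (by fun_prop)]
  simp only [Pi.mul_apply, hdensity]
  rw [lintegral_const_mul _ (hpdf _), lintegral_exponentialPDF_eq_one (by linarith), mul_one]

variable {Ω : Type*} [MeasurableSpace Ω] {P : Measure Ω} {μ : ℝ}

lemma lintegral_exp_neg_mul_sum_of_iIndepFun {ι : Type*} {X : ι → Ω → ℝ}
    (hX : iIndepFun X P) (hmX : ∀ i, Measurable (X i)) (hdist : ∀ i, P.map (X i) = expMeasure μ)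
    (hμ : 0 < μ) {s : ℝ} (hs : 0 ≤ s) (t : Finset ι) :
    ∫⁻ ω, ENNReal.ofReal (exp (-(s * ∑ i ∈ t, X i ω))) ∂P
      = ENNReal.ofReal (μ / (μ + s)) ^ t.card := by
  have hφ : Measurable fun x : ℝ => ENNReal.ofReal (exp (-(s * x))) := by fun_prop
  have hfactor : ∀ ω, ENNReal.ofReal (exp (-(s * ∑ i ∈ t, X i ω)))
      = ∏ i ∈ t, ENNReal.ofReal (exp (-(s * X i ω))) := by
    intro ω
    rw [Finset.mul_sum, ← Finset.sum_neg_distrib, exp_sum,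
      ENNReal.ofReal_prod_of_nonneg fun i _ => (exp_pos _).le]
  have hfactor_integral : ∀ i, ∫⁻ ω, ENNReal.ofReal (exp (-(s * X i ω))) ∂P
      = ENNReal.ofReal (μ / (μ + s)) := by
    intro i
    rw [← lintegral_exp_neg_mul_expMeasure hμ hs, ← hdist i, lintegral_map hφ (hmX i)]
  simp_rw [hfactor]
  rw [lintegral_prod_eq_prod_lintegral_of_indepFun t (fun i ω => ENNReal.ofReal (exp (-(s * X i ω))))
    (hX.comp _ fun _ => hφ) fun i => hφ.comp (hmX i)]
  simp only [hfactor_integral, Finset.prod_const]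

lemma measure_le_of_indepFun_expMeasure [IsProbabilityMeasure P] {Z T : Ω → ℝ}
    (hZ : Measurable Z) (hT : Measurable T) (hZT : IndepFun Z T P)
    (hdist : P.map T = expMeasure μ) (hμ : 0 < μ) (hZ0 : ∀ᵐ ω ∂P, 0 ≤ Z ω) :
    P {ω | Z ω ≤ T ω} = ∫⁻ ω, ENNReal.ofReal (exp (-(μ * Z ω))) ∂P := by
  have := isProbabilityMeasure_expMeasure hμ
  have hmeas : MeasurableSet {p : ℝ × ℝ | p.1 ≤ p.2} := measurableSet_le measurable_fst measurable_snd
  have hjoint : P.map (fun ω => (Z ω, T ω)) = (P.map Z).prod (expMeasure μ) := by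
    rw [← hdist]
    exact (indepFun_iff_map_prod_eq_prod_map_map hZ.aemeasurable hT.aemeasurable).1 hZT
  have hsection : ∀ᵐ z ∂P.map Z, expMeasure μ (Prod.mk z ⁻¹' {p : ℝ × ℝ | p.1 ≤ p.2})
      = ENNReal.ofReal (exp (-(μ * z))) := by
    filter_upwards [ae_map_iff hZ.aemeasurable measurableSet_Ici |>.2 hZ0] with z hz
    exact expMeasure_Ici hμ hz
  calc P {ω | Z ω ≤ T ω} = P.map (fun ω => (Z ω, T ω)) {p : ℝ × ℝ | p.1 ≤ p.2} :=
        (Measure.map_apply (hZ.prodMk hT) hmeas).symm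
    _ = ∫⁻ z, ENNReal.ofReal (exp (-(μ * z))) ∂P.map Z := by
        rw [hjoint, Measure.prod_apply hmeas]
        exact lintegral_congr_ae hsection
    _ = ∫⁻ ω, ENNReal.ofReal (exp (-(μ * Z ω))) ∂P := lintegral_map (by fun_prop) hZ

lemma iIndepFun.indepFun_sum_tail_head {X : ℕ → Ω → ℝ} (hX : iIndepFun X P)
    (hmX : ∀ i, Measurable (X i)) (n : ℕ) :
    IndepFun (fun ω => ∑ i ∈ Finset.range n, X (i + 1) ω) (X 0) P := by
  have hzero : 0 ∉ (Finset.range n).map ⟨Nat.succ, Nat.succ_injective⟩ := by simp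
  convert hX.indepFun_finsetSum_of_notMem hmX hzero using 1
  ext ω
  simp [Finset.sum_apply]

lemma measureReal_sinr_lt_of_iIndepFun [IsProbabilityMeasure P] {X : ℕ → Ω → ℝ}
    (hX : iIndepFun X P) (hmX : ∀ i, Measurable (X i)) (hdist : ∀ i, P.map (X i) = expMeasure μ)
    (hμ : 0 < μ) {ρ Γ : ℝ} (hρ : 0 < ρ) (hΓ : 0 < Γ) (n : ℕ) :
    P.real {ω | ρ * X 0 ω / (1 + ρ * ∑ i ∈ Finset.range n, X (i + 1) ω) < Γ}
      = 1 - exp (-μ * Γ / ρ) * (Γ + 1)⁻¹ ^ n := by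
  set S : Ω → ℝ := fun ω => ∑ i ∈ Finset.range n, X (i + 1) ω
  have hmS : Measurable S := Finset.measurable_sum _ fun i _ => hmX (i + 1)
  have hS0 : ∀ᵐ ω ∂P, 0 ≤ S ω := by
    have hX0 : ∀ i, ∀ᵐ ω ∂P, 0 ≤ X i ω := fun i =>
      ae_of_ae_map (hmX i).aemeasurable (hdist i ▸ ae_nonneg_expMeasure hμ)
    filter_upwards [ae_all_iff.2 hX0] with ω hω
    exact Finset.sum_nonneg fun i _ => hω (i + 1)
  set Z : Ω → ℝ := fun ω => Γ / ρ + Γ * S ω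
  have hmZ : Measurable Z := (hmS.const_mul Γ).const_add _
  have hZ0 : ∀ᵐ ω ∂P, 0 ≤ Z ω := by
    filter_upwards [hS0] with ω hω
    exact add_nonneg (by positivity) (mul_nonneg hΓ.le hω)
  have houtage : {ω | ρ * X 0 ω / (1 + ρ * S ω) < Γ} =ᵐ[P] ({ω | Z ω ≤ X 0 ω}ᶜ : Set Ω) := by
    filter_upwards [hS0] with ω hω
    have hden : 0 < 1 + ρ * S ω := by positivity
    change (ρ * X 0 ω / (1 + ρ * S ω) < Γ) = ¬ (Γ / ρ + Γ * S ω ≤ X 0 ω)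
    rw [not_le, div_lt_iff₀ hden, ← lt_div_iff₀' hρ, eq_iff_iff]
    constructor <;> intro h <;> convert h using 1 <;> field_simp
  have hsuccess : P {ω | Z ω ≤ X 0 ω} = ENNReal.ofReal (exp (-μ * Γ / ρ) * (Γ + 1)⁻¹ ^ n) := by
    have hsplit : ∀ ω, ENNReal.ofReal (exp (-(μ * Z ω)))
        = ENNReal.ofReal (exp (-μ * Γ / ρ)) * ENNReal.ofReal (exp (-(μ * Γ * S ω))) := by
      intro ω
      rw [← ENNReal.ofReal_mul (exp_pos _).le, ← exp_add]
      congr 2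
      simp only [Z]
      ring
    have hindep : IndepFun Z (X 0) P :=
      (hX.indepFun_sum_tail_head hmX n).comp (by fun_prop : Measurable fun x => Γ / ρ + Γ * x)
        measurable_id
    rw [measure_le_of_indepFun_expMeasure hmZ (hmX 0) hindep (hdist 0) hμ hZ0]
    simp_rw [hsplit]
    rw [lintegral_const_mul _ (by fun_prop),
      lintegral_exp_neg_mul_sum_of_iIndepFun (hX.precomp Nat.succ_injective) (fun _ => hmX _)
        (fun _ => hdist _) hμ (by positivity),
      Finset.card_range, ← ENNReal.ofReal_pow (by positivity), ← ENNReal.ofReal_mul (exp_pos _).le]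
    congr 3
    field_simp
    ring
  rw [measureReal_congr houtage, probReal_compl_eq_one_sub (measurableSet_le hmZ (hmX 0)),
    measureReal_def, hsuccess, ENNReal.toReal_ofReal (by positivity)]

lemma hasSum_measureReal_mem_of_indepFun [IsFiniteMeasure P] {β : Type*} [MeasurableSpace β]
    {K : Ω → ℕ} {Y : Ω → β} (hK : Measurable K) (hY : Measurable Y) (hKY : IndepFun K Y P)
    {T : ℕ → Set β} (hT : ∀ k, MeasurableSet (T k)) :
    HasSum (fun k => P.real {ω | K ω = k} * P.real (Y ⁻¹' T k)) (P.real {ω | Y ω ∈ T (K ω)}) := by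
  have hunion : {ω | Y ω ∈ T (K ω)} = ⋃ k, K ⁻¹' {k} ∩ Y ⁻¹' T k := by
    ext ω
    simp
  have hdisj : Pairwise (Function.onFun Disjoint fun k => K ⁻¹' {k} ∩ Y ⁻¹' T k) :=
    fun a b hab => disjoint_left.2 fun ω ha hb => hab (ha.1.symm.trans hb.1)
  have hmeas : ∀ k, MeasurableSet (K ⁻¹' {k} ∩ Y ⁻¹' T k) :=
    fun k => (hK (measurableSet_singleton k)).inter (hY (hT k))
  have hsum := ENNReal.hasSum_toReal (f := fun k => P (K ⁻¹' {k} ∩ Y ⁻¹' T k))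
    (by rw [← measure_iUnion hdisj hmeas]; exact measure_ne_top _ _)
  rw [← ENNReal.tsum_toReal_eq fun k => measure_ne_top _ _, ← measure_iUnion hdisj hmeas,
    ← hunion] at hsum
  rw [measureReal_def]
  convert hsum using 2 with k
  rw [hKY.measure_inter_preimage_eq_mul _ _ (measurableSet_singleton k) (hT k), ENNReal.toReal_mul]
  rfl

end ProbabilityTheory

/-- The Poisson law conditioned on being positive; the formula at `k = 0` is not a probability. -/
noncomputable def zeroTruncPoissonPMFReal (α : ℝ) (k : ℕ) : ℝ :=
  α ^ k * exp (-α) / (k ! * (1 - exp (-α)))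

lemma hasSum_pow_succ_div_factorial (x : ℝ) :
    HasSum (fun k : ℕ => x ^ (k + 1) / (k + 1)!) (exp x - 1) := by
  have h := (hasSum_nat_add_iff' 1 (f := fun k : ℕ => x ^ k / k !)).2
    (NormedSpace.expSeries_div_hasSum_exp x)
  simpa [← exp_eq_exp_ℝ] using h

lemma hasSum_zeroTruncPoissonPMFReal_mul_pow {α : ℝ} (hα : 0 < α) {q : ℝ} (hq : q ≠ 0) :
    HasSum (fun k : ℕ => zeroTruncPoissonPMFReal α (k + 1) * q ^ k)
      ((exp (α * q) - 1) / (q * (exp α - 1))) := by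
  have hden : exp α - 1 ≠ 0 := (sub_pos.2 (one_lt_exp_iff.2 hα)).ne'
  have hterm : ∀ k : ℕ, zeroTruncPoissonPMFReal α (k + 1) * q ^ k
      = (α * q) ^ (k + 1) / (k + 1)! / (q * (exp α - 1)) := by
    intro k
    rw [zeroTruncPoissonPMFReal, exp_neg]
    field_simp
    ring
  simpa only [hterm] using (hasSum_pow_succ_div_factorial (α * q)).div_const (q * (exp α - 1))

lemma hasSum_zeroTruncPoissonPMFReal_mul_one_sub_pow {α : ℝ} (hα : 0 < α) (c : ℝ) {q : ℝ}
    (hq : q ≠ 0) :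
    HasSum (fun k : ℕ => zeroTruncPoissonPMFReal α (k + 1) * (1 - c * q ^ k))
      (1 - c * ((exp (α * q) - 1) / (q * (exp α - 1)))) := by
  have hden : exp α - 1 ≠ 0 := (sub_pos.2 (one_lt_exp_iff.2 hα)).ne'
  have htotal := hasSum_zeroTruncPoissonPMFReal_mul_pow hα one_ne_zero
  simp only [one_pow, mul_one, one_mul, div_self hden] at htotal
  have hsum := htotal.sub ((hasSum_zeroTruncPoissonPMFReal_mul_pow hα hq).mul_left c)
  simpa only [mul_sub, mul_one, mul_left_comm c] using hsum

/-- Single-transmission (`M = 1`) outage probability under Rayleigh fading. The desired user's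
channel power `h` is exponential with rate `μ`; the number `K` of contenders in the bin is
zero-truncated Poisson with parameter `α = λ/B`; the interferers' channel powers `g i` are
i.i.d. exponential with rate `μ`; all of these are mutually independent. Treating interference
as noise, the outage probability is
`P[ρh/(1 + ρ∑_{i<K-1} g i) < Γ] = 1 - e^(-μΓ/ρ)(Γ+1)(e^(α/(Γ+1)) - 1)/(e^α - 1)`. -/
theorem rayleigh_outage_M1 {Ω : Type*} [MeasureSpace Ω]
    (P : Measure Ω) [IsProbabilityMeasure P]
    (h : Ω → ℝ) (g : ℕ → Ω → ℝ) (K : Ω → ℕ)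
    (hmh : Measurable h) (hmg : ∀ i, Measurable (g i)) (hmK : Measurable K)
    (μ ρ Γ α : ℝ) (hμ : 0 < μ) (hρ : 0 < ρ) (hΓ : 0 < Γ) (hα : 0 < α)
    (hdisth : Measure.map h P = ProbabilityTheory.expMeasure μ)
    (hdistg : ∀ i, Measure.map (g i) P = ProbabilityTheory.expMeasure μ)
    (hKpos : ∀ ω, 1 ≤ K ω)
    (hdistK : ∀ k : ℕ, 1 ≤ k →
      (P {ω | K ω = k}).toReal
        = α ^ k * Real.exp (-α) / (k.factorial * (1 - Real.exp (-α))))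
    (hindep : iIndepFun
        (fun n => (Nat.casesOn n h g : Ω → ℝ)) P)
    (hindepK : IndepFun K (fun ω => fun n => (Nat.casesOn n h g : Ω → ℝ) ω) P) :
    (P {ω | ρ * h ω / (1 + ρ * ∑ i ∈ Finset.range (K ω - 1), g i ω) < Γ}).toReal
      = 1 - Real.exp (-μ * Γ / ρ) * (Γ + 1)
          * (Real.exp (α / (Γ + 1)) - 1) / (Real.exp α - 1) := by
  let X : ℕ → Ω → ℝ := fun n => Nat.casesOn n h g
  have hmX : ∀ n, Measurable (X n) := by rintro (_ | i); exacts [hmh, hmg i]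
  have hdistX : ∀ n, P.map (X n) = expMeasure μ := by rintro (_ | i); exacts [hdisth, hdistg i]
  have hindepX : iIndepFun X P := hindep
  have hindepKX : IndepFun K (fun ω n => X n ω) P := hindepK
  let T : ℕ → Set (ℕ → ℝ) :=
    fun k => {f | ρ * f 0 / (1 + ρ * ∑ i ∈ Finset.range (k - 1), f (i + 1)) < Γ}
  have htotal := hasSum_measureReal_mem_of_indepFun hmK (measurable_pi_lambda _ hmX) hindepKX
    (T := T) fun k => measurableSet_lt (by fun_prop) measurable_const
  have hK0 : {ω | K ω = 0} = ∅ :=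
    eq_empty_of_forall_notMem fun ω => Nat.one_le_iff_ne_zero.mp (hKpos ω)
  rw [← hasSum_nat_add_iff' 1, Finset.sum_range_one, hK0, measureReal_empty, zero_mul,
    sub_zero] at htotal
  have hterm : ∀ k : ℕ, P.real {ω | K ω = k + 1} * P.real ((fun ω n => X n ω) ⁻¹' T (k + 1))
      = zeroTruncPoissonPMFReal α (k + 1) * (1 - exp (-μ * Γ / ρ) * (Γ + 1)⁻¹ ^ k) := by
    intro k
    rw [measureReal_def, hdistK _ k.succ_pos]
    exact congrArg _ (measureReal_sinr_lt_of_iIndepFun hindepX hmX hdistX hμ hρ hΓ k)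
  have hsum := hasSum_zeroTruncPoissonPMFReal_mul_one_sub_pow hα (exp (-μ * Γ / ρ))
    (q := (Γ + 1)⁻¹) (by positivity)
  simp only [← hterm] at hsum
  refine (htotal.unique hsum).trans ?_
  field_simp
end

section
/- Define $f(n, L, x) = \frac{n\log_2(1+x) + 0.5\log_2 n - L}{\sqrt{n V(x)}}$ where $V(x) = \left[1 - \frac{1}{(1+x)^2}\right]\log_2^2 e$. Assume $n \geq 1$ and $0.5\log_2 n \leq L$ (i.e., $n \leq 2^{2L}$). Then $f(n, L, \cdot)$ is strictly increasing on $(0, \infty)$. -/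
open Real

/-- The channel dispersion `V(x) = (1 - 1/(1+x)²)·(log₂ e)²`. -/
noncomputable def channelDispersion (x : ℝ) : ℝ :=
  (1 - 1 / (1 + x) ^ 2) * (Real.logb 2 (Real.exp 1)) ^ 2

/-- The finite-block-length exponent
`f(n,L,x) = (n·log₂(1+x) + 0.5·log₂ n - L)/√(n·V(x))`. -/
noncomputable def fblExponent (n L x : ℝ) : ℝ :=
  (n * Real.logb 2 (1 + x) + 0.5 * Real.logb 2 n - L) / Real.sqrt (n * channelDispersion x)

/-!
With `t = 1 + x`, `f(n, L, x)` is a positive multiple of `g(t) = (n log t + a) / √(1 - t⁻²)`,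
where `a = (0.5 log₂ n - L) log 2 ≤ 0`. The quotient rule gives
`g'(t) = (n (t² - 1) - (n log t + a)) / (t³ (1 - t⁻²)^{3/2})`, and the numerator is positive
for `t > 1` because `log t ≤ t - 1 < t² - 1` and `a ≤ 0`.
-/

theorem one_sub_one_div_sq_pos {t : ℝ} (ht : 1 < t) : 0 < 1 - 1 / t ^ 2 := by
  rw [sub_pos, div_lt_one (by positivity)]
  nlinarith

theorem log_lt_sq_sub_one {t : ℝ} (ht : 1 < t) : log t < t ^ 2 - 1 := by
  nlinarith [log_le_sub_one_of_pos (by linarith : (0 : ℝ) < t)]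

theorem hasDerivAt_log_add_div_sqrt_one_sub_one_div_sq (n a : ℝ) {t : ℝ} (ht : 1 < t) :
    HasDerivAt (fun s => (n * log s + a) / √(1 - 1 / s ^ 2))
      ((n * (t ^ 2 - 1) - (n * log t + a)) / (t ^ 3 * √(1 - 1 / t ^ 2) ^ 3)) t := by
  have hS := one_sub_one_div_sq_pos ht
  have hS' : HasDerivAt (fun s : ℝ => 1 - 1 / s ^ 2) (2 / t ^ 3) t := by
    refine (((hasDerivAt_const t 1).fun_div (hasDerivAt_pow 2 t) (by positivity)).const_sub
      1).congr_deriv ?_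
    field_simp
    ring
  have hN : HasDerivAt (fun s => n * log s + a) (n / t) t := by
    simpa [div_eq_mul_inv] using ((hasDerivAt_log (by positivity)).const_mul n).add_const a
  have hq : √(1 - 1 / t ^ 2) ≠ 0 := (sqrt_pos.2 hS).ne'
  refine (hN.fun_div (hS'.sqrt hS.ne') hq).congr_deriv ?_
  have hsq : √(1 - 1 / t ^ 2) ^ 2 * t ^ 2 = t ^ 2 - 1 := by
    rw [sq_sqrt hS.le]
    field_simp
  generalize √(1 - 1 / t ^ 2) = q at hq hsq ⊢
  field_simp
  linear_combination n * hsq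

theorem strictMonoOn_log_add_div_sqrt_one_sub_one_div_sq {n a : ℝ} (hn : 0 < n) (ha : a ≤ 0) :
    StrictMonoOn (fun t => (n * log t + a) / √(1 - 1 / t ^ 2)) (Set.Ioi 1) := by
  have hderiv (t : ℝ) (ht : t ∈ Set.Ioi 1) :=
    hasDerivAt_log_add_div_sqrt_one_sub_one_div_sq n a ht
  refine strictMonoOn_of_deriv_pos (convex_Ioi 1) (HasDerivAt.continuousOn hderiv) fun t ht => ?_
  rw [interior_Ioi] at ht
  rw [(hderiv t ht).deriv]
  rw [Set.mem_Ioi] at ht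
  have hnum : n * log t + a < n * (t ^ 2 - 1) := by nlinarith [log_lt_sq_sub_one ht]
  have hq := sqrt_pos.2 (one_sub_one_div_sq_pos ht)
  exact div_pos (by linarith) (by positivity)

theorem fblExponent_eq {n : ℝ} (hn : 0 < n) (L x : ℝ) :
    fblExponent n L x =
      (n * log (1 + x) + (0.5 * logb 2 n - L) * log 2) / √(1 - 1 / (1 + x) ^ 2) / √n := by
  have hl2 : 0 < log 2 := log_pos one_lt_two
  have hsqrt : √(n * channelDispersion x) = √n * √(1 - 1 / (1 + x) ^ 2) / log 2 := by
    rw [channelDispersion, logb, log_exp, sqrt_mul hn.le, sqrt_mul' _ (by positivity),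
      sqrt_sq (by positivity)]
    ring
  rw [fblExponent, hsqrt, logb, logb]
  field_simp
  ring

/-- For `n ≥ 1` and `0.5·log₂ n ≤ L` (i.e. `n ≤ 2^(2L)`), the finite-block-length exponent
`f(n, L, ·)` is strictly increasing on `(0, ∞)`. -/
theorem fblExponent_strictMonoOn (n L : ℝ) (hn : 1 ≤ n)
    (hb : 0.5 * Real.logb 2 n ≤ L) :
    StrictMonoOn (fblExponent n L) (Set.Ioi 0) := by
  have hn0 : 0 < n := by linarith
  have ha : (0.5 * logb 2 n - L) * log 2 ≤ 0 :=
    mul_nonpos_of_nonpos_of_nonneg (by linarith) (log_nonneg one_le_two)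
  have hg := strictMonoOn_log_add_div_sqrt_one_sub_one_div_sq hn0 ha
  intro x (hx : 0 < x) y (hy : 0 < y) hxy
  rw [fblExponent_eq hn0, fblExponent_eq hn0]
  refine div_lt_div_of_pos_right (hg ?_ ?_ (by linarith)) (sqrt_pos.2 hn0)
  · show 1 < 1 + x; linarith
  · show 1 < 1 + y; linarith
end

section
/- Define $f(n, L, x) = \frac{n\log_2(1+x) + 0.5\log_2 n - L}{\sqrt{n V(x)}}$ with $V(x) = \left[1 - \frac{1}{(1+x)^2}\right]\log_2^2 e$, and assume $n \geq 1$ and $0.5\log_2 n \leq L$. Then $f(n, L, \cdot)$ is concave on $(0, \infty)$: its second derivative equals $\sqrt{n}\,\frac{x+1}{(x^2+2x)^{3/2}}\left[\frac{3[\log_2(1+x) + b]}{\log_2(e)(x^2+2x)} - 1 - \frac{1}{(1+x)^2}\right]$ with $b = \frac{0.5\log_2 n - L}{n} \leq 0$, which is negative for all $x > 0$. -/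
open Real

/-!
With `b = (0.5 log₂ n - L) log 2 / n ≤ 0` the exponent factors as
`f(n, L, x) = √n · (1 + x)(log (1 + x) + b) / √(x² + 2x)`, so it suffices that this profile is
concave on `(0, ∞)`. Writing `t = 1 + x`, its second derivative has the sign of
`3t²(log t + b) - (t⁴ - 1)`, which is nonpositive since `3t² log t ≤ t⁴ - 1` for `t ≥ 1`;
that inequality follows from `u ≤ sinh u` at `u = 2 log t`.
-/

lemma log_le_half_sub_inv {t : ℝ} (ht : 1 ≤ t) : log t ≤ (t - t⁻¹) / 2 := by
  rw [← sinh_log (by linarith)]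
  exact self_le_sinh_iff.2 (log_nonneg ht)

lemma three_mul_sq_mul_log_le {t : ℝ} (ht : 1 ≤ t) : 3 * t ^ 2 * log t ≤ t ^ 4 - 1 := by
  calc 3 * t ^ 2 * log t ≤ 4 * t ^ 2 * log t := by
        linarith [mul_nonneg (sq_nonneg t) (log_nonneg ht)]
    _ = t ^ 2 * (2 * log (t ^ 2)) := by rw [log_pow]; ring
    _ ≤ t ^ 2 * (t ^ 2 - (t ^ 2)⁻¹) := by
        gcongr; linarith [log_le_half_sub_inv (one_le_pow₀ ht : 1 ≤ t ^ 2)]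
    _ = t ^ 4 - 1 := by field_simp

noncomputable def fblProfile (b x : ℝ) : ℝ := (1 + x) * (log (1 + x) + b) / √(x ^ 2 + 2 * x)

noncomputable def fblProfileDeriv (b x : ℝ) : ℝ :=
  (x ^ 2 + 2 * x - log (1 + x) - b) / ((x ^ 2 + 2 * x) * √(x ^ 2 + 2 * x))

noncomputable def fblProfileDeriv2 (b x : ℝ) : ℝ :=
  (3 * (1 + x) * (log (1 + x) + b) - (1 + x) * (x ^ 2 + 2 * x) - (x ^ 2 + 2 * x) / (1 + x)) /
    ((x ^ 2 + 2 * x) ^ 2 * √(x ^ 2 + 2 * x))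

lemma hasDerivAt_log_one_add {x : ℝ} (hx : 0 < 1 + x) :
    HasDerivAt (fun y => log (1 + y)) (1 + x)⁻¹ x := by
  simpa using ((hasDerivAt_id x).const_add 1).log hx.ne'

lemma hasDerivAt_sq_add_two_mul (x : ℝ) :
    HasDerivAt (fun y : ℝ => y ^ 2 + 2 * y) (2 * (1 + x)) x :=
  ((hasDerivAt_pow 2 x).add ((hasDerivAt_id' x).const_mul 2)).congr_deriv (by ring)

lemma hasDerivAt_sqrt_sq_add_two_mul {x : ℝ} (hx : 0 < x) :
    HasDerivAt (fun y : ℝ => √(y ^ 2 + 2 * y)) ((1 + x) / √(x ^ 2 + 2 * x)) x :=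
  ((hasDerivAt_sq_add_two_mul x).sqrt (by positivity)).congr_deriv (by field_simp)

lemma hasDerivAt_fblProfile (b : ℝ) {x : ℝ} (hx : 0 < x) :
    HasDerivAt (fblProfile b) (fblProfileDeriv b x) x := by
  have hs : 0 < x ^ 2 + 2 * x := by positivity
  have hnum : HasDerivAt (fun y => (1 + y) * (log (1 + y) + b))
      (log (1 + x) + b + (1 + x) * (1 + x)⁻¹) x :=
    (((hasDerivAt_id' x).const_add 1).mul
      ((hasDerivAt_log_one_add (by linarith)).add_const b)).congr_deriv (by ring)
  refine (hnum.div (hasDerivAt_sqrt_sq_add_two_mul hx) (sqrt_pos.2 hs).ne').congr_deriv ?_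
  rw [fblProfileDeriv]
  set q := √(x ^ 2 + 2 * x)
  have hq : q ^ 2 = x ^ 2 + 2 * x := sq_sqrt hs.le
  have : q ≠ 0 := (sqrt_pos.2 hs).ne'
  field_simp
  linear_combination (log (1 + x) + b) * (1 + x) ^ 2 * hq

lemma hasDerivAt_fblProfileDeriv (b : ℝ) {x : ℝ} (hx : 0 < x) :
    HasDerivAt (fblProfileDeriv b) (fblProfileDeriv2 b x) x := by
  have hs : 0 < x ^ 2 + 2 * x := by positivity
  have hnum : HasDerivAt (fun y => y ^ 2 + 2 * y - log (1 + y) - b) (2 * (1 + x) - (1 + x)⁻¹) x :=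
    ((hasDerivAt_sq_add_two_mul x).sub (hasDerivAt_log_one_add (by linarith))).sub_const b
  have hden : HasDerivAt (fun y => (y ^ 2 + 2 * y) * √(y ^ 2 + 2 * y))
      (2 * (1 + x) * √(x ^ 2 + 2 * x) + (x ^ 2 + 2 * x) * ((1 + x) / √(x ^ 2 + 2 * x))) x :=
    (hasDerivAt_sq_add_two_mul x).mul (hasDerivAt_sqrt_sq_add_two_mul hx)
  refine (hnum.div hden (mul_pos hs (sqrt_pos.2 hs)).ne').congr_deriv ?_
  rw [fblProfileDeriv2]
  set q := √(x ^ 2 + 2 * x)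
  have hq : q ^ 2 = x ^ 2 + 2 * x := sq_sqrt hs.le
  have : q ≠ 0 := (sqrt_pos.2 hs).ne'
  rw [← hq]
  field_simp
  ring

lemma fblProfileDeriv2_nonpos {b x : ℝ} (hb : b ≤ 0) (hx : 0 < x) : fblProfileDeriv2 b x ≤ 0 := by
  have ht : 0 < 1 + x := by linarith
  refine div_nonpos_of_nonpos_of_nonneg ?_ (by positivity)
  rw [← mul_le_mul_iff_of_pos_left ht, mul_zero]
  have hnum : (1 + x) * (3 * (1 + x) * (log (1 + x) + b) - (1 + x) * (x ^ 2 + 2 * x)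
      - (x ^ 2 + 2 * x) / (1 + x)) =
      3 * (1 + x) ^ 2 * log (1 + x) - ((1 + x) ^ 4 - 1) + 3 * (1 + x) ^ 2 * b := by
    field_simp
    ring
  rw [hnum]
  linarith [three_mul_sq_mul_log_le (by linarith : 1 ≤ 1 + x),
    mul_nonpos_of_nonneg_of_nonpos (by positivity : 0 ≤ 3 * (1 + x) ^ 2) hb]

lemma concaveOn_fblProfile {b : ℝ} (hb : b ≤ 0) : ConcaveOn ℝ (Set.Ioi 0) (fblProfile b) := by
  refine concaveOn_of_hasDerivWithinAt2_nonpos (f' := fblProfileDeriv b)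
    (f'' := fblProfileDeriv2 b) (convex_Ioi 0) ?_ ?_ ?_ ?_
  · exact fun x hx => (hasDerivAt_fblProfile b hx).continuousAt.continuousWithinAt
  all_goals rw [interior_Ioi]
  · exact fun x hx => (hasDerivAt_fblProfile b hx).hasDerivWithinAt
  · exact fun x hx => (hasDerivAt_fblProfileDeriv b hx).hasDerivWithinAt
  · exact fun x hx => fblProfileDeriv2_nonpos hb hx

lemma channelDispersion_eq {x : ℝ} (hx : 1 + x ≠ 0) :
    channelDispersion x = (x ^ 2 + 2 * x) / ((1 + x) * log 2) ^ 2 := by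
  rw [channelDispersion, logb, log_exp]
  field_simp
  ring

lemma fblExponent_eq_sqrt_mul_fblProfile {n L x : ℝ} (hn : 0 < n) (hx : 0 < x) :
    fblExponent n L x = √n * fblProfile ((0.5 * logb 2 n - L) * log 2 / n) x := by
  have ht : 0 < 1 + x := by linarith
  have hsqrt : √(n * channelDispersion x) = √n * √(x ^ 2 + 2 * x) / ((1 + x) * log 2) := by
    rw [channelDispersion_eq ht.ne', mul_div_assoc', sqrt_div' _ (by positivity),
      sqrt_sq (by positivity), sqrt_mul hn.le]
  rw [fblExponent, fblProfile, hsqrt, logb, logb]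
  field_simp
  rw [sq_sqrt hn.le]
  ring

/-- For `n ≥ 1` and `0.5·log₂ n ≤ L`, the finite-block-length exponent `f(n, L, ·)` is concave
on `(0, ∞)`. -/
theorem fblExponent_concaveOn (n L : ℝ) (hn : 1 ≤ n)
    (hb : 0.5 * Real.logb 2 n ≤ L) :
    ConcaveOn ℝ (Set.Ioi 0) (fblExponent n L) := by
  have hn0 : 0 < n := by linarith
  have hb0 : (0.5 * logb 2 n - L) * log 2 / n ≤ 0 :=
    div_nonpos_of_nonpos_of_nonneg
      (mul_nonpos_of_nonpos_of_nonneg (by linarith) (log_nonneg one_le_two)) hn0.le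
  exact ((concaveOn_fblProfile hb0).smul (sqrt_nonneg n)).congr fun x hx =>
    (fblExponent_eq_sqrt_mul_fblProfile hn0 hx).symm
end

section
/- For all $x > 0$: $3\ln(1+x) < (x^2 + 2x)\left(1 + \frac{1}{(1+x)^2}\right)$. -/
open Real

/-! Since `log (1 + x) < x`, it suffices that `3 x` is below the right-hand side, and the gap is
`x ((1 + x) x² + 1) / (1 + x)²`. -/

lemma sq_add_two_mul_mul_one_add_inv_sq_sub_three_mul {x : ℝ} (hx : 1 + x ≠ 0) :
    (x ^ 2 + 2 * x) * (1 + 1 / (1 + x) ^ 2) - 3 * x = x * ((1 + x) * x ^ 2 + 1) / (1 + x) ^ 2 := by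
  field_simp
  ring

lemma three_mul_le_sq_add_two_mul_mul_one_add_inv_sq {x : ℝ} (hx : 0 ≤ x) :
    3 * x ≤ (x ^ 2 + 2 * x) * (1 + 1 / (1 + x) ^ 2) := by
  have gap := sq_add_two_mul_mul_one_add_inv_sq_sub_three_mul (x := x) (by positivity)
  have : 0 ≤ x * ((1 + x) * x ^ 2 + 1) / (1 + x) ^ 2 := by positivity
  linarith

/-- For all `x > 0`: `3·ln(1+x) < (x² + 2x)(1 + 1/(1+x)²)`. -/
theorem three_log_lt (x : ℝ) (hx : 0 < x) :
    3 * Real.log (1 + x) < (x ^ 2 + 2 * x) * (1 + 1 / (1 + x) ^ 2) := by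
  have log_lt : Real.log (1 + x) < x := by
    simpa using log_lt_sub_one_of_pos (by positivity : 0 < 1 + x) (by linarith : 1 + x ≠ 1)
  calc 3 * Real.log (1 + x) < 3 * x := by linarith
    _ ≤ _ := three_mul_le_sq_add_two_mul_mul_one_add_inv_sq hx.le
end

section
/- Let $K$ be zero-truncated Poisson with parameter $\alpha = \lambda/B > 0$, i.e., $\mathbb{P}[K=k] = \frac{\alpha^k e^{-\alpha}}{k!(1-e^{-\alpha})}$, and let $\mathrm{SINR}_1(k) = \frac{\rho}{1 + \rho(k-1)}$ with $0 < \rho < 1$. Then $\mathbb{E}[\mathrm{SINR}_1(K)] = \frac{\rho}{1-\rho}\left[1 + \frac{(-\alpha)^{1 - 1/\rho}}{e^{\alpha}-1}\left(\Gamma_o(\rho^{-1}) - \Gamma_o(\rho^{-1}, -\alpha)\right)\right]$, where $\Gamma_o(s) = \int_0^{\infty} t^{s-1}e^{-t}\,dt$ is the Gamma function and $\Gamma_o(s,x) = \int_x^{\infty} t^{s-1}e^{-t}\,dt$ the upper incomplete Gamma function (analytically continued to negative arguments). -/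
/-! With `s = 1/ρ` the mean is `(e^α - 1)⁻¹ ∑_{m≥0} α^(m+1) / ((m+1)! (s + m))`. The partial
fractions `(s - 1)/((m + 1)(s + m)) = 1/(m + 1) - 1/(s + m)` turn `(s - 1)` times this series into
`e^α - 1 - α ∑_{m≥0} α^m / (m! (s + m))`. Kummer's transformation
`∑ α^m / (m! (s + m)) = e^α ∑ (-α)^n / (s (s + 1) ⋯ (s + n))` then matches the defining series
of `γ(s, -α)`, since `(-α)^(1-s) γ(s, -α) = -α e^α ∑ (-α)^n / (s (s + 1) ⋯ (s + n))`. -/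

open Real Complex

/-- The lower incomplete Gamma function `γ(s, x)`, analytically continued to all complex `x`
via its everywhere-convergent series `γ(s,x) = x^s e^(-x) ∑_{n≥0} x^n / (s(s+1)⋯(s+n))`. -/
noncomputable def lowerIncGamma (s x : ℂ) : ℂ :=
  x ^ s * Complex.exp (-x) * ∑' n : ℕ, x ^ n / ∏ j ∈ Finset.range (n + 1), (s + j)

/-- The upper incomplete Gamma function `Γ(s, x) = Γ(s) - γ(s, x)`, analytically continued
to negative (complex) second arguments. -/
noncomputable def upperIncGamma (s x : ℂ) : ℂ :=
  Complex.Gamma s - lowerIncGamma s x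

open Finset
open scoped Nat

section Kummer

variable {s : ℝ}

lemma prod_range_add_pos (hs : 0 < s) (n : ℕ) : 0 < ∏ j ∈ range n, (s + j) :=
  prod_pos fun j _ => by positivity

lemma prod_range_succ_add (s : ℝ) (n : ℕ) :
    ∏ j ∈ range (n + 1), (s + j) = s * ∏ j ∈ range n, (s + 1 + j) := by
  rw [prod_range_succ', mul_comm]
  push_cast
  simp only [add_zero, add_assoc, add_comm (1 : ℝ)]

lemma mul_factorial_le_prod_range_add (hs : 0 < s) (n : ℕ) :
    s * n ! ≤ ∏ j ∈ range (n + 1), (s + j) := by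
  rw [prod_range_succ_add, ← prod_range_add_one_eq_factorial]
  push_cast
  gcongr s * ∏ j ∈ range n, ?_ with j
  linarith

lemma sum_range_neg_one_pow_div_factorial_mul_prod (hs : 0 < s) (k : ℕ) :
    ∑ n ∈ range (k + 1), (-1 : ℝ) ^ n / ((k - n)! * ∏ j ∈ range (n + 1), (s + j))
      = 1 / (k ! * (s + k)) := by
  induction k generalizing s with
  | zero => simp
  | succ k ih =>
    have hshift : ∀ n ∈ range (k + 1),
        (-1 : ℝ) ^ (n + 1) / ((k + 1 - (n + 1))! * ∏ j ∈ range (n + 1 + 1), (s + j))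
          = -(1 / s) * ((-1 : ℝ) ^ n / ((k - n)! * ∏ j ∈ range (n + 1), (s + 1 + j))) := by
      intro n _
      have := prod_range_add_pos (by linarith : 0 < s + 1) (n + 1)
      rw [Nat.add_sub_add_right, prod_range_succ_add s (n + 1), pow_succ]
      field_simp
    rw [sum_range_succ', sum_congr rfl hshift, ← mul_sum, ih (by linarith)]
    push_cast [Nat.factorial_succ, prod_range_one]
    field_simp
    ring

lemma summable_norm_pow_div_prod_range_add (hs : 0 < s) (x : ℝ) :
    Summable fun n : ℕ => ‖x ^ n / ∏ j ∈ range (n + 1), (s + j)‖ := by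
  refine .of_nonneg_of_le (fun _ => norm_nonneg _) (fun n => ?_)
    ((NormedSpace.norm_expSeries_div_summable x).mul_left s⁻¹)
  have := prod_range_add_pos hs (n + 1)
  rw [norm_div, norm_div, Real.norm_of_nonneg this.le, Real.norm_natCast]
  calc ‖x ^ n‖ / ∏ j ∈ range (n + 1), (s + j)
      ≤ ‖x ^ n‖ / (s * n !) := by
        gcongr
        exact mul_factorial_le_prod_range_add hs n
    _ = s⁻¹ * (‖x ^ n‖ / n !) := by field_simp

/-- Kummer's transformation, read off the Cauchy product of the two series on the right. -/
theorem hasSum_pow_div_factorial_mul_add (hs : 0 < s) (x : ℝ) :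
    HasSum (fun k : ℕ => x ^ k / (k ! * (s + k)))
      (Real.exp x * ∑' n : ℕ, (-x) ^ n / ∏ j ∈ range (n + 1), (s + j)) := by
  have hcauchy := hasSum_sum_range_mul_of_summable_norm
    (NormedSpace.norm_expSeries_div_summable x) (summable_norm_pow_div_prod_range_add hs (-x))
  rw [(NormedSpace.expSeries_div_hasSum_exp x).tsum_eq, ← Real.exp_eq_exp_ℝ] at hcauchy
  refine hcauchy.congr_fun fun k => ?_
  rw [← sum_range_reflect, add_tsub_cancel_right]
  have hterm : ∀ n ∈ range (k + 1),
      x ^ (k - n) / (k - n)! * ((-x) ^ (k - (k - n)) / ∏ j ∈ range (k - (k - n) + 1), (s + j))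
        = x ^ k * ((-1) ^ n / ((k - n)! * ∏ j ∈ range (n + 1), (s + j))) := by
    intro n hn
    have hnk : n ≤ k := Nat.lt_succ_iff.mp (mem_range.mp hn)
    rw [Nat.sub_sub_self hnk, neg_pow, ← pow_sub_mul_pow x hnk]
    ring
  rw [sum_congr rfl hterm, ← mul_sum, sum_range_neg_one_pow_div_factorial_mul_prod hs]
  ring

theorem hasSum_sub_one_mul_pow_succ_div_factorial_mul_add {x F : ℝ} (hs : 0 < s)
    (hF : HasSum (fun m : ℕ => x ^ m / (m ! * (s + m))) F) :
    HasSum (fun m : ℕ => (s - 1) * (x ^ (m + 1) / ((m + 1)! * (s + m))))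
      (Real.exp x - 1 - x * F) := by
  have hexp : HasSum (fun m : ℕ => x ^ (m + 1) / (m + 1)!) (Real.exp x - 1) := by
    rw [Real.exp_eq_exp_ℝ]
    simpa using (hasSum_nat_add_iff' 1).mpr (NormedSpace.expSeries_div_hasSum_exp x)
  refine (hexp.sub (hF.mul_left x)).congr_fun fun m => ?_
  have : 0 < s + m := by positivity
  push_cast [Nat.factorial_succ]
  field_simp
  ring

end Kummer

theorem tsum_truncatedPoisson_mul_sinr {ρ α : ℝ} (hρ0 : 0 < ρ) (hρ1 : ρ < 1) (hα : 0 < α) :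
    ∑' k : ℕ+, α ^ (k : ℕ) * Real.exp (-α) / ((k : ℕ)! * (1 - Real.exp (-α)))
        * (ρ / (1 + ρ * (((k : ℕ) : ℝ) - 1)))
      = ρ / (1 - ρ) * (1 - α * Real.exp α
          * (∑' n : ℕ, (-α) ^ n / ∏ j ∈ range (n + 1), (1 / ρ + j)) / (Real.exp α - 1)) := by
  have hexp : Real.exp α - 1 ≠ 0 := by linarith [Real.one_lt_exp_iff.mpr hα]
  have hρ : 1 - ρ ≠ 0 := by linarith
  have hshift := hasSum_sub_one_mul_pow_succ_div_factorial_mul_add (by positivity)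
    (hasSum_pow_div_factorial_mul_add (s := 1 / ρ) (by positivity) α)
  have hterm : ∀ m : ℕ, α ^ (m + 1) * Real.exp (-α) / ((m + 1)! * (1 - Real.exp (-α)))
        * (ρ / (1 + ρ * (((m + 1 : ℕ) : ℝ) - 1)))
      = ρ / (1 - ρ) / (Real.exp α - 1)
          * ((1 / ρ - 1) * (α ^ (m + 1) / ((m + 1)! * (1 / ρ + m)))) := by
    intro m
    have : 1 + ρ * m ≠ 0 := by positivity
    rw [Real.exp_neg]
    push_cast [add_sub_cancel_right]
    field_simp
  rw [tsum_pnat_eq_tsum_succ (f := fun k : ℕ => α ^ k * Real.exp (-α) / (k ! * (1 - Real.exp (-α)))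
      * (ρ / (1 + ρ * ((k : ℝ) - 1)))), tsum_congr hterm, (hshift.mul_left _).tsum_eq]
  field_simp

lemma cpow_one_sub_mul_lowerIncGamma {x : ℂ} (hx : x ≠ 0) (s : ℂ) :
    x ^ (1 - s) * lowerIncGamma s x
      = x * Complex.exp (-x) * ∑' n : ℕ, x ^ n / ∏ j ∈ range (n + 1), (s + j) := by
  rw [lowerIncGamma, ← mul_assoc, ← mul_assoc, ← cpow_add _ _ hx, sub_add_cancel, cpow_one]

/-- Mean first-attempt SINR over a zero-truncated Poisson number of contenders. With
`P[K = k] = α^k e^(-α)/(k!(1 - e^(-α)))` for `k ≥ 1` and `SINR₁(k) = ρ/(1 + ρ(k-1))`,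
`0 < ρ < 1`, one has
`E[SINR₁(K)] = ρ/(1-ρ) · [1 + (-α)^(1-1/ρ)/(e^α - 1) · (Γ(1/ρ) - Γ(1/ρ, -α))]`,
where the incomplete Gamma function is analytically continued to negative arguments. -/
theorem mean_sinr_truncatedPoisson (ρ α : ℝ) (hρ0 : 0 < ρ) (hρ1 : ρ < 1) (hα : 0 < α) :
    ((∑' k : ℕ+, α ^ (k : ℕ) * Real.exp (-α) / ((k : ℕ).factorial * (1 - Real.exp (-α)))
        * (ρ / (1 + ρ * (((k : ℕ) : ℝ) - 1))) : ℝ) : ℂ)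
      = (ρ / (1 - ρ) : ℝ)
        * (1 + (-(α : ℂ)) ^ ((1 : ℂ) - 1 / (ρ : ℂ)) / (Complex.exp (α : ℂ) - 1)
            * (Complex.Gamma (1 / (ρ : ℂ)) - upperIncGamma (1 / (ρ : ℂ)) (-(α : ℂ)))) := by
  have hα0 : -(α : ℂ) ≠ 0 := neg_ne_zero.mpr (ofReal_ne_zero.mpr hα.ne')
  rw [tsum_truncatedPoisson_mul_sinr hρ0 hρ1 hα, upperIncGamma, sub_sub_cancel,
    div_mul_eq_mul_div ((-(α : ℂ)) ^ _), cpow_one_sub_mul_lowerIncGamma hα0, neg_neg]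
  push_cast [ofReal_tsum]
  ring
end
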